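/- If (A, α) is a right Galois object for a Hopf *-algebra H, then h^[2]* ⊗ h^[1]* = (S(h)*)^[1] ⊗ (S(h)*)^[2] for all h ∈ H; consequently the Miyashita–Ulbrich action satisfies (a ◁ h)* = a* ◁ S(h)*. -/

import Mathlib

/-! Let `Ψ : (A ⊗ H) ⊗ H → A ⊗ H`, `(a ⊗ g) ⊗ k ↦ a ⊗ g S(k)`. Coassociativity of `α` and the
antipode axiom give `Ψ((α ⊗ id)(α y)) = y ⊗ 1`, hence `Ψ((α ⊗ id)(can(x ⊗ y))) = α(x)(y ⊗ 1)`.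
For `h^[1] ⊗ h^[2] = can⁻¹(1 ⊗ h)` this reads `α(h^[1])(h^[2] ⊗ 1) = 1 ⊗ S(h)`. Since `α` is a
*-map, the adjoint of this identity is `(h^[2]* ⊗ 1)α(h^[1]*) = 1 ⊗ S(h)*`, that is,
`can(h^[2]* ⊗ h^[1]*) = 1 ⊗ S(h)*`. The statement about `a ◁ h = h^[1] a h^[2]` follows. -/

open TensorProduct

noncomputable section

variable {H A : Type} [Ring H] [HopfAlgebra ℂ H] [StarRing H] [StarModule ℂ H]
  [Ring A] [Algebra ℂ A] [StarRing A] [StarModule ℂ A]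

/-- The canonical Galois map `A ⊗ A → A ⊗ H`, `x ⊗ y ↦ (x⊗1)α(y)`. -/
def canMap (α : A →ₗ[ℂ] A ⊗[ℂ] H) : A ⊗[ℂ] A →ₗ[ℂ] A ⊗[ℂ] H :=
  TensorProduct.map (LinearMap.mul' ℂ A) LinearMap.id ∘ₗ
    (TensorProduct.assoc ℂ A A H).symm.toLinearMap ∘ₗ TensorProduct.map LinearMap.id α

/-- The translation map `h ↦ h^[1] ⊗ h^[2] = can⁻¹(1 ⊗ h)`. -/
def translationMap (e : (A ⊗[ℂ] A) ≃ₗ[ℂ] (A ⊗[ℂ] H)) : H →ₗ[ℂ] A ⊗[ℂ] A :=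
  e.symm.toLinearMap ∘ₗ (TensorProduct.mk ℂ A H) 1

/-- The Miyashita–Ulbrich action `a ⊗ h ↦ h^[1] a h^[2]`. -/
def muAction (e : (A ⊗[ℂ] A) ≃ₗ[ℂ] (A ⊗[ℂ] H)) : A ⊗[ℂ] H →ₗ[ℂ] A :=
  LinearMap.mul' ℂ A ∘ₗ
    TensorProduct.map (LinearMap.mul' ℂ A) LinearMap.id ∘ₗ
    TensorProduct.map (TensorProduct.comm ℂ A A).toLinearMap LinearMap.id ∘ₗ
    (TensorProduct.assoc ℂ A A A).symm.toLinearMap ∘ₗ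
    TensorProduct.map LinearMap.id (translationMap e)

/-- A right `H`-comodule algebra structure on `A` (pointfree formulation). -/
structure IsComoduleAlgebra (α : A →ₗ[ℂ] A ⊗[ℂ] H) : Prop where
  coassoc : TensorProduct.map α LinearMap.id ∘ₗ α
    = (TensorProduct.assoc ℂ A H H).symm.toLinearMap ∘ₗ
        TensorProduct.map LinearMap.id Coalgebra.comul ∘ₗ α
  counital : (TensorProduct.rid ℂ A).toLinearMap ∘ₗ
      TensorProduct.map LinearMap.id Coalgebra.counit ∘ₗ α = LinearMap.id
  mul_hom : α ∘ₗ LinearMap.mul' ℂ A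
    = TensorProduct.map (LinearMap.mul' ℂ A) (LinearMap.mul' ℂ H) ∘ₗ
        (TensorProduct.tensorTensorTensorComm ℂ A H A H).toLinearMap ∘ₗ
        TensorProduct.map α α
  one_hom : α 1 = (1 : A) ⊗ₜ[ℂ] (1 : H)

end

section

variable {R A' H' : Type*} [CommSemiring R] [Semiring A'] [Algebra R A'] [Semiring H']
  [HopfAlgebra R H']

def mulAntipodeRight : (A' ⊗[R] H') ⊗[R] H' →ₗ[R] A' ⊗[R] H' :=
  LinearMap.mul' R (A' ⊗[R] H') ∘ₗ LinearMap.lTensor (A' ⊗[R] H')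
    ((Algebra.TensorProduct.includeRight : H' →ₐ[R] A' ⊗[R] H').toLinearMap ∘ₗ
      HopfAlgebra.antipode R)

@[simp]
lemma mulAntipodeRight_tmul (w : A' ⊗[R] H') (k : H') :
    mulAntipodeRight (w ⊗ₜ[R] k) = w * ((1 : A') ⊗ₜ[R] HopfAlgebra.antipode R k) := by
  simp [mulAntipodeRight]

lemma mulAntipodeRight_tmul_one_mul (z : A' ⊗[R] H') (w : (A' ⊗[R] H') ⊗[R] H') :
    mulAntipodeRight ((z ⊗ₜ[R] (1 : H')) * w) = z * mulAntipodeRight w := by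
  induction w with
  | zero => simp
  | tmul w k => simp [mul_assoc]
  | add w w' hw hw' => simp only [mul_add, map_add, hw, hw']

lemma mulAntipodeRight_assoc_symm_tmul (a : A') (t : H' ⊗[R] H') :
    mulAntipodeRight ((TensorProduct.assoc R A' H' H').symm (a ⊗ₜ[R] t)) =
      a ⊗ₜ[R] LinearMap.mul' R H' ((HopfAlgebra.antipode R).lTensor H' t) := by
  induction t with
  | zero => simp
  | tmul g k => simp
  | add t t' ht ht' => simp only [TensorProduct.tmul_add, map_add, ht, ht']

lemma mulAntipodeRight_assoc_symm_lTensor_comul (w : A' ⊗[R] H') :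
    mulAntipodeRight ((TensorProduct.assoc R A' H' H').symm (Coalgebra.comul.lTensor A' w)) =
      TensorProduct.rid R A' (Coalgebra.counit.lTensor A' w) ⊗ₜ[R] (1 : H') := by
  induction w with
  | zero => simp
  | tmul a g =>
    simp [mulAntipodeRight_assoc_symm_tmul, Algebra.algebraMap_eq_smul_one,
      TensorProduct.smul_tmul]
  | add w w' hw hw' => simp only [map_add, hw, hw', TensorProduct.add_tmul]

end

section

variable {R A' : Type*} [CommSemiring R] [Semiring A'] [Algebra R A']

def sandwich (a : A') : A' ⊗[R] A' →ₗ[R] A' :=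
  LinearMap.mul' R A' ∘ₗ LinearMap.rTensor A' (LinearMap.mulRight R a)

@[simp]
lemma sandwich_tmul (a u v : A') : sandwich a (u ⊗ₜ[R] v) = u * a * v := by
  simp [sandwich]

lemma star_sandwich [StarRing R] [StarRing A'] [StarModule R A'] (a : A') (t : A' ⊗[R] A') :
    star (sandwich a t) = sandwich (star a) (TensorProduct.comm R A' A' (star t)) := by
  induction t with
  | zero => simp
  | tmul u v => simp [mul_assoc]
  | add t t' ht ht' => simp only [map_add, star_add, ht, ht']

end

section

variable {H A : Type} [Ring H] [HopfAlgebra ℂ H] [Ring A] [Algebra ℂ A]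

lemma canMap_tmul (α : A →ₗ[ℂ] A ⊗[ℂ] H) (x y : A) :
    canMap α (x ⊗ₜ[ℂ] y) = (x ⊗ₜ[ℂ] (1 : H)) * α y := by
  have h : TensorProduct.map (LinearMap.mul' ℂ A) LinearMap.id ∘ₗ
      (TensorProduct.assoc ℂ A A H).symm.toLinearMap ∘ₗ TensorProduct.mk ℂ A (A ⊗[ℂ] H) x =
      LinearMap.mulLeft ℂ (x ⊗ₜ[ℂ] (1 : H)) := by
    ext y g
    simp
  exact LinearMap.congr_fun h (α y)

namespace IsComoduleAlgebra

variable {α : A →ₗ[ℂ] A ⊗[ℂ] H}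

lemma map_mul (hα : IsComoduleAlgebra α) (x y : A) : α (x * y) = α x * α y := by
  have h := hα.mul_hom
  rw [← LinearMap.comp_assoc, ← LinearMap.mul'_tensor] at h
  simpa using LinearMap.congr_fun h (x ⊗ₜ[ℂ] y)

lemma rTensor_tmul_one_mul (hα : IsComoduleAlgebra α) (x : A) (w : A ⊗[ℂ] H) :
    α.rTensor H ((x ⊗ₜ[ℂ] (1 : H)) * w) = (α x ⊗ₜ[ℂ] (1 : H)) * α.rTensor H w := by
  induction w with
  | zero => simp
  | tmul y g => simp [hα.map_mul]
  | add w w' hw hw' => simp only [mul_add, map_add, hw, hw']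

lemma mulAntipodeRight_rTensor_apply (hα : IsComoduleAlgebra α) (y : A) :
    mulAntipodeRight (α.rTensor H (α y)) = y ⊗ₜ[ℂ] (1 : H) := by
  have hcoassoc := LinearMap.congr_fun hα.coassoc y
  have hcounital := LinearMap.congr_fun hα.counital y
  simp only [LinearMap.comp_apply, LinearEquiv.coe_coe, LinearMap.id_apply] at hcoassoc hcounital
  rw [LinearMap.rTensor, hcoassoc]
  exact (mulAntipodeRight_assoc_symm_lTensor_comul (α y)).trans
    (congrArg (· ⊗ₜ[ℂ] (1 : H)) hcounital)

lemma mulAntipodeRight_rTensor_canMap (hα : IsComoduleAlgebra α) (x y : A) :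
    mulAntipodeRight (α.rTensor H (canMap α (x ⊗ₜ[ℂ] y))) = α x * (y ⊗ₜ[ℂ] (1 : H)) := by
  rw [canMap_tmul, hα.rTensor_tmul_one_mul, mulAntipodeRight_tmul_one_mul,
    hα.mulAntipodeRight_rTensor_apply]

end IsComoduleAlgebra

lemma canMap_translationMap {α : A →ₗ[ℂ] A ⊗[ℂ] H} {e : (A ⊗[ℂ] A) ≃ₗ[ℂ] (A ⊗[ℂ] H)}
    (he : e.toLinearMap = canMap α) (h : H) :
    canMap α (translationMap e h) = (1 : A) ⊗ₜ[ℂ] h := by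
  rw [← he]
  simp [translationMap]

lemma muAction_tmul (e : (A ⊗[ℂ] A) ≃ₗ[ℂ] (A ⊗[ℂ] H)) (a : A) (h : H) :
    muAction e (a ⊗ₜ[ℂ] h) = sandwich a (translationMap e h) := by
  simp only [muAction, LinearMap.comp_apply, TensorProduct.map_tmul, LinearMap.id_apply]
  induction translationMap e h with
  | zero => simp
  | tmul u v => simp [mul_assoc]
  | add t t' ht ht' => simp only [TensorProduct.tmul_add, map_add, ht, ht']

end

section

variable {H A : Type} [Ring H] [HopfAlgebra ℂ H] [StarRing H] [StarModule ℂ H]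
  [Ring A] [Algebra ℂ A] [StarRing A] [StarModule ℂ A]

lemma IsComoduleAlgebra.canMap_comm_star {α : A →ₗ[ℂ] A ⊗[ℂ] H} (hα : IsComoduleAlgebra α)
    (hstar : ∀ a, α (star a) = star (α a)) (t : A ⊗[ℂ] A) :
    canMap α (TensorProduct.comm ℂ A A (star t)) =
      star (mulAntipodeRight (α.rTensor H (canMap α t))) := by
  induction t with
  | zero => simp
  | tmul x y =>
    rw [TensorProduct.star_tmul, TensorProduct.comm_tmul, canMap_tmul,
      hα.mulAntipodeRight_rTensor_canMap, hstar, star_mul, TensorProduct.star_tmul, star_one]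
  | add t t' ht ht' => simp only [star_add, map_add, ht, ht']

theorem translationMap_star_antipode {α : A →ₗ[ℂ] A ⊗[ℂ] H} (hα : IsComoduleAlgebra α)
    {e : (A ⊗[ℂ] A) ≃ₗ[ℂ] (A ⊗[ℂ] H)} (he : e.toLinearMap = canMap α)
    (hstar : ∀ a, α (star a) = star (α a)) (h : H) :
    translationMap e (star (HopfAlgebra.antipode ℂ h)) =
      TensorProduct.comm ℂ A A (star (translationMap e h)) := by
  apply e.injective
  have he' : ∀ t, e t = canMap α t := LinearMap.congr_fun he
  rw [he', he', canMap_translationMap he, hα.canMap_comm_star hstar, canMap_translationMap he]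
  simp [hα.one_hom]

theorem translationMap_star_general (α : A →ₗ[ℂ] A ⊗[ℂ] H) (hα : IsComoduleAlgebra α)
    (e : (A ⊗[ℂ] A) ≃ₗ[ℂ] (A ⊗[ℂ] H)) (he : e.toLinearMap = canMap α)
    -- `(A, α)` is a comodule *-algebra: `α(a*) = α(a)^{*⊗*}`
    (hα_star : ∀ (a : A) (n : ℕ) (x : Fin n → A) (h : Fin n → H),
      α a = ∑ i, x i ⊗ₜ[ℂ] h i →
      α (star a) = ∑ i, star (x i) ⊗ₜ[ℂ] star (h i)) :
    (∀ (h : H) (n : ℕ) (u v : Fin n → A),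
      translationMap e h = ∑ i, u i ⊗ₜ[ℂ] v i →
      translationMap e (star (HopfAlgebra.antipode (R := ℂ) h))
        = ∑ i, star (v i) ⊗ₜ[ℂ] star (u i)) ∧
    (∀ (a : A) (h : H),
      star (muAction e (a ⊗ₜ[ℂ] h))
        = muAction e (star a ⊗ₜ[ℂ] star (HopfAlgebra.antipode (R := ℂ) h))) := by
  have hstar (a : A) : α (star a) = star (α a) := by
    obtain ⟨n, x, k, hrep⟩ := TensorProduct.exists_sum_tmul_eq (α a)
    rw [hα_star a n x k hrep, hrep, star_sum]
    simp
  have hτ := translationMap_star_antipode hα he hstar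
  refine ⟨fun h n u v hrep => ?_, fun a h => ?_⟩
  · rw [hτ, hrep, star_sum]
    simp
  · rw [muAction_tmul, muAction_tmul, hτ, star_sandwich]

/-- If `(A, α)` is a right Galois object for a Hopf *-algebra `H` (so `Δ`, `ε` and `α` are
compatible with the *-structures), then `h^[2]* ⊗ h^[1]* = (S(h)*)^[1] ⊗ (S(h)*)^[2]` for all
`h ∈ H`; consequently the Miyashita–Ulbrich action satisfies `(a ◁ h)* = a* ◁ S(h)*`.
The Sweedler-type identities are quantified over all finite representations of the
relevant tensors. -/
theorem translationMap_star (α : A →ₗ[ℂ] A ⊗[ℂ] H) (hα : IsComoduleAlgebra α)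
    (e : (A ⊗[ℂ] A) ≃ₗ[ℂ] (A ⊗[ℂ] H)) (he : e.toLinearMap = canMap α)
    -- `H` is a Hopf *-algebra: `Δ(h*) = Δ(h)^{*⊗*}` and `ε(h*) = conj ε(h)`
    (hcomul_star : ∀ (h : H) (n : ℕ) (a b : Fin n → H),
      Coalgebra.comul (R := ℂ) h = ∑ i, a i ⊗ₜ[ℂ] b i →
      Coalgebra.comul (R := ℂ) (star h) = ∑ i, star (a i) ⊗ₜ[ℂ] star (b i))
    (hcounit_star : ∀ h : H,
      Coalgebra.counit (R := ℂ) (star h) = starRingEnd ℂ (Coalgebra.counit (R := ℂ) h))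
    -- `(A, α)` is a comodule *-algebra: `α(a*) = α(a)^{*⊗*}`
    (hα_star : ∀ (a : A) (n : ℕ) (x : Fin n → A) (h : Fin n → H),
      α a = ∑ i, x i ⊗ₜ[ℂ] h i →
      α (star a) = ∑ i, star (x i) ⊗ₜ[ℂ] star (h i)) :
    (∀ (h : H) (n : ℕ) (u v : Fin n → A),
      translationMap e h = ∑ i, u i ⊗ₜ[ℂ] v i →
      translationMap e (star (HopfAlgebra.antipode (R := ℂ) h))
        = ∑ i, star (v i) ⊗ₜ[ℂ] star (u i)) ∧
    (∀ (a : A) (h : H),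
      star (muAction e (a ⊗ₜ[ℂ] h))
        = muAction e (star a ⊗ₜ[ℂ] star (HopfAlgebra.antipode (R := ℂ) h))) :=
  translationMap_star_general α hα e he hα_star

end
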